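/- arXiv:2403.09345 — 2 statements merged into one kernel-verified Lean document; each statement's English description precedes it below -/
import Mathlib

section
/- For every A ∈ M_d(ℂ): 2 Re tr((ℒA) Aᴴ) = −(γ/h) ∑_{j=1}^J tr([L_j,A] [L_j,A]ᴴ) + (γ/h) Re tr((∑_{j=1}^J [L_j, L_jᴴ]) Aᴴ A). -/
open Matrix
open scoped BigOperators

/-- The Lindbladian `ℒA = (i/h)[P,A] + (γ/h) ∑ⱼ (LⱼALⱼᴴ − ½(LⱼᴴLⱼA + ALⱼᴴLⱼ))`. -/
noncomputable def Lindbladian {d J : ℕ} (h γ : ℝ) (P : Matrix (Fin d) (Fin d) ℂ)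
    (L : Fin J → Matrix (Fin d) (Fin d) ℂ) (A : Matrix (Fin d) (Fin d) ℂ) :
    Matrix (Fin d) (Fin d) ℂ :=
  (Complex.I / (h : ℂ)) • (P * A - A * P)
    + ((γ / h : ℝ) : ℂ) • ∑ j, (L j * A * (L j)ᴴ
        - (1 / 2 : ℂ) • ((L j)ᴴ * L j * A + A * ((L j)ᴴ * L j)))

/-- The adjoint Lindbladian
`ℒ*B = −(i/h)[P,B] + (γ/h) ∑ⱼ (LⱼᴴBLⱼ − ½(LⱼᴴLⱼB + BLⱼᴴLⱼ))`. -/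
noncomputable def LindbladianAdj {d J : ℕ} (h γ : ℝ) (P : Matrix (Fin d) (Fin d) ℂ)
    (L : Fin J → Matrix (Fin d) (Fin d) ℂ) (B : Matrix (Fin d) (Fin d) ℂ) :
    Matrix (Fin d) (Fin d) ℂ :=
  -(Complex.I / (h : ℂ)) • (P * B - B * P)
    + ((γ / h : ℝ) : ℂ) • ∑ j, ((L j)ᴴ * B * L j
        - (1 / 2 : ℂ) • ((L j)ᴴ * L j * B + B * ((L j)ᴴ * L j)))

private lemma tr_comm4 {d : ℕ} (a b c e : Matrix (Fin d) (Fin d) ℂ) :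
    (a*(b*(c*e))).trace = (b*(c*(e*a))).trace := by
  rw [Matrix.trace_mul_comm]; simp [Matrix.mul_assoc]

private lemma tr_comm4' {d : ℕ} (a b c e : Matrix (Fin d) (Fin d) ℂ) :
    (a*(b*(c*e))).trace = (c*(e*(a*b))).trace := by
  rw [tr_comm4, tr_comm4]

private lemma key_dissip {d : ℕ} (L A : Matrix (Fin d) (Fin d) ℂ) :
    ((L*A*Lᴴ - (1/2:ℂ)•(Lᴴ*L*A + A*(Lᴴ*L)))*Aᴴ).trace
      + (star (((L*A*Lᴴ - (1/2:ℂ)•(Lᴴ*L*A + A*(Lᴴ*L)))*Aᴴ).trace) : ℂ)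
    = -(((L*A - A*L)*(L*A - A*L)ᴴ).trace) + ((L*Lᴴ - Lᴴ*L)*(Aᴴ*A)).trace := by
  rw [← Matrix.trace_conjTranspose]
  simp only [conjTranspose_mul, conjTranspose_sub, conjTranspose_smul, conjTranspose_add,
    conjTranspose_conjTranspose, sub_mul, mul_sub, add_mul, mul_add, smul_mul_assoc,
    Matrix.mul_smul, trace_sub, trace_add, trace_smul, Matrix.mul_assoc, star_div₀, star_one,
    star_ofNat, smul_eq_mul]
  linear_combination (tr_comm4 A Aᴴ Lᴴ L) + (tr_comm4 A L Lᴴ Aᴴ) + (tr_comm4 Lᴴ L Aᴴ A)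
    + (tr_comm4 L A (Aᴴ) Lᴴ) + (tr_comm4 Aᴴ Lᴴ L A) + (tr_comm4 L Aᴴ A Lᴴ)
    + (tr_comm4 Aᴴ A Lᴴ L) - (1/2:ℂ) * (tr_comm4' A Aᴴ Lᴴ L)

private lemma key_ham {d : ℕ} (h : ℝ) (P A : Matrix (Fin d) (Fin d) ℂ) (hP : P.IsHermitian) :
    ((Complex.I / (h:ℂ)) * ((P*A - A*P)*Aᴴ).trace).re = 0 := by
  set z := ((P*A - A*P)*Aᴴ).trace with hz
  have hst : star z = z := by
    rw [hz, ← Matrix.trace_conjTranspose]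
    simp only [conjTranspose_mul, conjTranspose_sub, conjTranspose_conjTranspose, hP.eq,
      mul_sub, sub_mul, trace_sub, Matrix.mul_assoc]
    rw [Matrix.trace_mul_comm A (Aᴴ*P), Matrix.trace_mul_comm A (P*Aᴴ)]
    rw [show Aᴴ*P*A = Aᴴ*(P*A) from Matrix.mul_assoc _ _ _, Matrix.trace_mul_comm Aᴴ (P*A),
      Matrix.mul_assoc, Matrix.mul_assoc]
  have him : z.im = 0 := by
    have := congrArg Complex.im hst
    simp only [Complex.star_def, Complex.conj_im] at this
    linarith
  simp [Complex.mul_re, Complex.div_re, Complex.div_im, him]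

/-- Lemma 4.3, first identity (finite-dimensional instance):
`2 Re tr((ℒA)Aᴴ) = −(γ/h) ∑ⱼ tr([Lⱼ,A][Lⱼ,A]ᴴ) + (γ/h) Re tr((∑ⱼ[Lⱼ,Lⱼᴴ]) Aᴴ A)`. -/
theorem lindbladian_real_part (d J : ℕ) (hd : 1 ≤ d) (hJ : 1 ≤ J) (h γ : ℝ)
    (hh : 0 < h) (hγ : 0 ≤ γ) (P : Matrix (Fin d) (Fin d) ℂ) (hP : P.IsHermitian)
    (L : Fin J → Matrix (Fin d) (Fin d) ℂ) (A : Matrix (Fin d) (Fin d) ℂ) :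
    2 * ((Lindbladian h γ P L A * Aᴴ).trace).re
      = -(γ / h) * ∑ j, (((L j * A - A * L j) * (L j * A - A * L j)ᴴ).trace).re
        + (γ / h) * (((∑ j, (L j * (L j)ᴴ - (L j)ᴴ * L j)) * (Aᴴ * A)).trace).re := by
  have hexp : (Lindbladian h γ P L A * Aᴴ).trace
      = (Complex.I / (h:ℂ)) * ((P*A - A*P)*Aᴴ).trace
        + ((γ / h : ℝ) : ℂ) * ∑ j, ((L j * A * (L j)ᴴ
            - (1/2:ℂ)•((L j)ᴴ * L j * A + A * ((L j)ᴴ * L j)))*Aᴴ).trace := by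
    simp only [Lindbladian, add_mul, smul_mul_assoc, trace_add, trace_smul, smul_eq_mul,
      Finset.sum_mul, Matrix.trace_sum]
  rw [hexp]
  rw [Complex.add_re, mul_add, key_ham h P A hP, mul_zero, zero_add]
  have hsum2 : (((∑ j, (L j * (L j)ᴴ - (L j)ᴴ * L j)) * (Aᴴ * A)).trace).re
      = ∑ j, (((L j * (L j)ᴴ - (L j)ᴴ * L j) * (Aᴴ * A)).trace).re := by
    rw [Finset.sum_mul, Matrix.trace_sum, Complex.re_sum]
  rw [hsum2]
  have hre : ∀ j, 2 * ((((L j * A * (L j)ᴴ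
        - (1/2:ℂ)•((L j)ᴴ * L j * A + A * ((L j)ᴴ * L j)))*Aᴴ).trace).re)
      = -(((L j * A - A * L j) * (L j * A - A * L j)ᴴ).trace).re
        + (((L j * (L j)ᴴ - (L j)ᴴ * L j) * (Aᴴ * A)).trace).re := by
    intro j
    have := congrArg Complex.re (key_dissip (L j) A)
    simpa [Complex.add_re, Complex.star_def, Complex.conj_re, two_mul, Complex.neg_re] using this
  rw [Complex.re_ofReal_mul, Complex.re_sum]
  have h2 : (γ/h) * ∑ j, (2 * ((((L j * A * (L j)ᴴ
        - (1/2:ℂ)•((L j)ᴴ * L j * A + A * ((L j)ᴴ * L j)))*Aᴴ).trace).re))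
      = 2 * ((γ/h) * ∑ j, ((((L j * A * (L j)ᴴ
        - (1/2:ℂ)•((L j)ᴴ * L j * A + A * ((L j)ᴴ * L j)))*Aᴴ).trace).re)) := by
    rw [← Finset.mul_sum]; ring
  rw [← h2]
  simp_rw [hre]
  rw [Finset.sum_add_distrib, Finset.sum_neg_distrib]
  ring
end

section
/- Let M ∈ ℝ and assume that 2M·I − (γ/h) ∑_{j=1}^J [L_j, L_jᴴ] is positive semidefinite. Then for every λ > 0 and every A ∈ M_d(ℂ): λ‖A‖ ≤ ‖ℒA − (M+λ)A‖ and λ‖A‖ ≤ ‖ℒ*A − (M+λ)A‖. -/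
open Matrix
open scoped BigOperators ComplexOrder

/-- The Hilbert–Schmidt norm `‖A‖ = (tr(AAᴴ))^{1/2}`. -/
noncomputable def hsNorm {d : ℕ} (A : Matrix (Fin d) (Fin d) ℂ) : ℝ :=
  Real.sqrt (((A * Aᴴ).trace).re)

/-
The resolvent bound follows from quasi-dissipativity, `Re⟨ℒA, A⟩ ≤ M‖A‖²`: then
`λ‖A‖² ≤ -Re⟨(ℒ - M - λ)A, A⟩ ≤ ‖(ℒ - M - λ)A‖ ‖A‖` by Cauchy–Schwarz.
For a Hermitian `P` the trace `tr([P, A]Aᴴ)` is real, so the Hamiltonian part of `ℒ` drops out of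
`Re⟨ℒA, A⟩`. For each jump operator `K`, Cauchy–Schwarz and AM–GM give
`Re tr(KAKᴴAᴴ) = Re⟨KA, AK⟩ ≤ (‖KA‖² + ‖AK‖²) / 2`, which bounds the dissipator term by
`tr(A[K, Kᴴ]Aᴴ) / 2`; sandwiching the positivity hypothesis between `A` and `Aᴴ` bounds the sum
by `M‖A‖²`. As `ℒ*` is the Hilbert–Schmidt adjoint of `ℒ`, `Re⟨ℒ*A, A⟩ = Re⟨ℒA, A⟩`.
-/
namespace Matrix

variable {n : Type*} [Fintype n]

theorem re_trace_mul_conjTranspose_self_nonneg (A : Matrix n n ℂ) : 0 ≤ (A * Aᴴ).trace.re :=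
  (Complex.nonneg_iff.mp (posSemidef_self_mul_conjTranspose A).trace_nonneg).1

theorem abs_re_trace_mul_conjTranspose_le (X Y : Matrix n n ℂ) :
    |(Y * Xᴴ).trace.re| ≤ √(X * Xᴴ).trace.re * √(Y * Yᴴ).trace.re := by
  classical
  -- Mathlib's inner product `⟪X, Y⟫ = tr(Y * M * Xᴴ)` on matrices, with weight `M = 1`
  let := toMatrixSeminormedAddCommGroup (1 : Matrix n n ℂ) PosSemidef.one
  let := toMatrixInnerProductSpace (1 : Matrix n n ℂ) PosSemidef.one
  have := (Complex.abs_re_le_norm _).trans (norm_inner_le_norm (𝕜 := ℂ) X Y)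
  rw [norm_eq_sqrt_re_inner (𝕜 := ℂ) X, norm_eq_sqrt_re_inner (𝕜 := ℂ) Y] at this
  change |(Y * 1 * Xᴴ).trace.re| ≤ √(X * 1 * Xᴴ).trace.re * √(Y * 1 * Yᴴ).trace.re at this
  simpa only [Matrix.mul_one] using this

theorem re_trace_mul_conjTranspose_le_add (X Y : Matrix n n ℂ) :
    (Y * Xᴴ).trace.re ≤ ((X * Xᴴ).trace.re + (Y * Yᴴ).trace.re) / 2 := by
  have hX := Real.sq_sqrt (re_trace_mul_conjTranspose_self_nonneg X)
  have hY := Real.sq_sqrt (re_trace_mul_conjTranspose_self_nonneg Y)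
  nlinarith [le_of_abs_le (abs_re_trace_mul_conjTranspose_le X Y),
    sq_nonneg (√(X * Xᴴ).trace.re - √(Y * Yᴴ).trace.re)]

theorem re_trace_dissipator_mul_conjTranspose_le (K A : Matrix n n ℂ) :
    ((K * A * Kᴴ - (1 / 2 : ℂ) • (Kᴴ * K * A + A * (Kᴴ * K))) * Aᴴ).trace.re
      ≤ (A * (K * Kᴴ - Kᴴ * K) * Aᴴ).trace.re / 2 := by
  have hcross := re_trace_mul_conjTranspose_le_add (A * K) (K * A)
  have hKA : (K * A * (K * A)ᴴ).trace = (Kᴴ * K * A * Aᴴ).trace := by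
    rw [conjTranspose_mul, ← Matrix.mul_assoc, trace_mul_comm]
    simp only [Matrix.mul_assoc]
  simp only [conjTranspose_mul, ← Matrix.mul_assoc] at hcross hKA
  simp only [Matrix.sub_mul, Matrix.mul_sub, Matrix.smul_mul, Matrix.add_mul, trace_sub, trace_add,
    trace_smul, Complex.sub_re, smul_eq_mul, Matrix.mul_assoc] at hcross hKA ⊢
  norm_num [Complex.mul_re, ← hKA]
  linarith

theorem im_trace_commutator_mul_conjTranspose {P : Matrix n n ℂ} (hP : P.IsHermitian)
    (A : Matrix n n ℂ) : ((P * A - A * P) * Aᴴ).trace.im = 0 := by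
  rw [← Complex.conj_eq_iff_im, starRingEnd_apply, ← trace_conjTranspose]
  simp only [conjTranspose_mul, conjTranspose_sub, hP.eq, conjTranspose_conjTranspose,
    Matrix.sub_mul, trace_sub]
  rw [← Matrix.mul_assoc A Aᴴ P, trace_mul_comm]
  simp only [Matrix.mul_assoc]

theorem re_trace_mul_mul_conjTranspose_le [DecidableEq n] {K : Matrix n n ℂ} {c : ℝ}
    (hK : ((c : ℂ) • 1 - K).PosSemidef) (A : Matrix n n ℂ) :
    (A * K * Aᴴ).trace.re ≤ c * (A * Aᴴ).trace.re := by
  have := (Complex.nonneg_iff.mp (hK.mul_mul_conjTranspose_same A).trace_nonneg).1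
  simp only [Matrix.mul_sub, Matrix.sub_mul, Matrix.mul_smul, Matrix.smul_mul, Matrix.mul_one,
    trace_sub, trace_smul, Complex.sub_re, smul_eq_mul, Complex.re_ofReal_mul] at this
  linarith

end Matrix

theorem hsNorm_nonneg {d : ℕ} (A : Matrix (Fin d) (Fin d) ℂ) : 0 ≤ hsNorm A :=
  Real.sqrt_nonneg _

theorem hsNorm_sq {d : ℕ} (A : Matrix (Fin d) (Fin d) ℂ) : hsNorm A ^ 2 = (A * Aᴴ).trace.re :=
  Real.sq_sqrt (re_trace_mul_conjTranspose_self_nonneg A)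

theorem mul_hsNorm_le_hsNorm_sub_smul_of_re_trace_le {d : ℕ} {T A : Matrix (Fin d) (Fin d) ℂ}
    {M lam : ℝ} (hT : (T * Aᴴ).trace.re ≤ M * (A * Aᴴ).trace.re) :
    lam * hsNorm A ≤ hsNorm (T - ((M + lam : ℝ) : ℂ) • A) := by
  set D := T - ((M + lam : ℝ) : ℂ) • A
  have hDA : (D * Aᴴ).trace.re = (T * Aᴴ).trace.re - (M + lam) * (A * Aᴴ).trace.re := by
    simp only [D, Matrix.sub_mul, Matrix.smul_mul, trace_sub, trace_smul, Complex.sub_re,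
      smul_eq_mul, Complex.re_ofReal_mul]
  have hcs : -(D * Aᴴ).trace.re ≤ hsNorm A * hsNorm D :=
    (neg_le_abs _).trans (abs_re_trace_mul_conjTranspose_le A D)
  have hA : lam * hsNorm A ^ 2 ≤ hsNorm A * hsNorm D := by
    rw [hsNorm_sq]
    linarith
  rcases (hsNorm_nonneg A).eq_or_lt with hzero | hpos
  · rw [← hzero, mul_zero]
    exact hsNorm_nonneg D
  · nlinarith

theorem trace_lindbladianAdj_mul_conjTranspose {d J : ℕ} {h γ : ℝ} {P : Matrix (Fin d) (Fin d) ℂ}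
    (hP : P.IsHermitian) {L : Fin J → Matrix (Fin d) (Fin d) ℂ} (A B : Matrix (Fin d) (Fin d) ℂ) :
    (LindbladianAdj h γ P L B * Aᴴ).trace = (B * (Lindbladian h γ P L A)ᴴ).trace := by
  simp only [Lindbladian, LindbladianAdj, conjTranspose_add, conjTranspose_smul, conjTranspose_sum,
    conjTranspose_sub, conjTranspose_mul, conjTranspose_conjTranspose, hP.eq, Matrix.add_mul,
    Matrix.mul_add, Matrix.sub_mul, Matrix.mul_sub, Matrix.smul_mul, Matrix.mul_smul,
    Finset.sum_mul, Finset.mul_sum, trace_add, trace_sub, trace_smul, trace_sum, Matrix.mul_assoc]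
  have cycle : ∀ X Y : Matrix (Fin d) (Fin d) ℂ, (X * (B * Y)).trace = (B * (Y * X)).trace :=
    fun X Y => by rw [trace_mul_comm, Matrix.mul_assoc]
  have cycle' : ∀ X Y : Matrix (Fin d) (Fin d) ℂ,
      (X * (Y * (B * Aᴴ))).trace = (B * (Aᴴ * (X * Y))).trace :=
    fun X Y => by rw [← Matrix.mul_assoc, trace_mul_comm, Matrix.mul_assoc]
  simp [Complex.conj_ofReal, div_eq_mul_inv, cycle, cycle', Matrix.mul_assoc]

theorem re_trace_lindbladian_mul_conjTranspose_le {d J : ℕ} {h γ : ℝ} (hγh : 0 ≤ γ / h)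
    {P : Matrix (Fin d) (Fin d) ℂ} (hP : P.IsHermitian) {L : Fin J → Matrix (Fin d) (Fin d) ℂ}
    {M : ℝ} (hM : (((2 * M : ℝ) : ℂ) • (1 : Matrix (Fin d) (Fin d) ℂ)
        - ((γ / h : ℝ) : ℂ) • ∑ j, (L j * (L j)ᴴ - (L j)ᴴ * L j)).PosSemidef)
    (A : Matrix (Fin d) (Fin d) ℂ) :
    (Lindbladian h γ P L A * Aᴴ).trace.re ≤ M * (A * Aᴴ).trace.re := by
  have hsplit : (Lindbladian h γ P L A * Aᴴ).trace.re
      = (Complex.I / h * ((P * A - A * P) * Aᴴ).trace).re + γ / h * ∑ j, ((L j * A * (L j)ᴴ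
          - (1 / 2 : ℂ) • ((L j)ᴴ * L j * A + A * ((L j)ᴴ * L j))) * Aᴴ).trace.re := by
    simp only [Lindbladian, Matrix.add_mul, Matrix.smul_mul, Finset.sum_mul, trace_add, trace_smul,
      trace_sum, smul_eq_mul, Complex.add_re, Complex.re_ofReal_mul, Complex.re_sum]
  have hham : (Complex.I / h * ((P * A - A * P) * Aᴴ).trace).re = 0 := by
    simp [Complex.mul_re, im_trace_commutator_mul_conjTranspose hP, Complex.div_re]
  have hdiss : γ / h * ∑ j,
      ((L j * A * (L j)ᴴ - (1 / 2 : ℂ) • ((L j)ᴴ * L j * A + A * ((L j)ᴴ * L j))) * Aᴴ).trace.re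
      ≤ (A * (((γ / h : ℝ) : ℂ) • ∑ j, (L j * (L j)ᴴ - (L j)ᴴ * L j)) * Aᴴ).trace.re / 2 := by
    calc _ ≤ γ / h * ∑ j, (A * (L j * (L j)ᴴ - (L j)ᴴ * L j) * Aᴴ).trace.re / 2 :=
          mul_le_mul_of_nonneg_left
            (Finset.sum_le_sum fun j _ => re_trace_dissipator_mul_conjTranspose_le (L j) A) hγh
      _ = _ := by
          simp only [Matrix.mul_smul, Matrix.smul_mul, Matrix.mul_sum, Matrix.sum_mul, trace_smul,
            trace_sum, smul_eq_mul, Complex.re_ofReal_mul, Complex.re_sum]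
          rw [← Finset.sum_div, mul_div_assoc]
  have hpsd := re_trace_mul_mul_conjTranspose_le hM A
  linarith

theorem re_trace_lindbladianAdj_mul_conjTranspose_le {d J : ℕ} {h γ : ℝ} (hγh : 0 ≤ γ / h)
    {P : Matrix (Fin d) (Fin d) ℂ} (hP : P.IsHermitian) {L : Fin J → Matrix (Fin d) (Fin d) ℂ}
    {M : ℝ} (hM : (((2 * M : ℝ) : ℂ) • (1 : Matrix (Fin d) (Fin d) ℂ)
        - ((γ / h : ℝ) : ℂ) • ∑ j, (L j * (L j)ᴴ - (L j)ᴴ * L j)).PosSemidef)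
    (A : Matrix (Fin d) (Fin d) ℂ) :
    (LindbladianAdj h γ P L A * Aᴴ).trace.re ≤ M * (A * Aᴴ).trace.re := by
  rw [trace_lindbladianAdj_mul_conjTranspose hP A A,
    show A * (Lindbladian h γ P L A)ᴴ = (Lindbladian h γ P L A * Aᴴ)ᴴ by
      rw [conjTranspose_mul, conjTranspose_conjTranspose],
    trace_conjTranspose, Complex.star_def, Complex.conj_re]
  exact re_trace_lindbladian_mul_conjTranspose_le hγh hP hM A

theorem lindbladian_resolvent_estimate_general (d J : ℕ) (h γ : ℝ)
    (hh : 0 < h) (hγ : 0 ≤ γ) (P : Matrix (Fin d) (Fin d) ℂ) (hP : P.IsHermitian)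
    (L : Fin J → Matrix (Fin d) (Fin d) ℂ) (M : ℝ)
    (hM : (((2 * M : ℝ) : ℂ) • (1 : Matrix (Fin d) (Fin d) ℂ)
        - ((γ / h : ℝ) : ℂ) • ∑ j, (L j * (L j)ᴴ - (L j)ᴴ * L j)).PosSemidef)
    (lam : ℝ) (A : Matrix (Fin d) (Fin d) ℂ) :
    lam * hsNorm A ≤ hsNorm (Lindbladian h γ P L A - (((M + lam : ℝ) : ℂ)) • A)
      ∧ lam * hsNorm A ≤ hsNorm (LindbladianAdj h γ P L A - (((M + lam : ℝ) : ℂ)) • A) := by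
  have hγh : 0 ≤ γ / h := div_nonneg hγ hh.le
  exact ⟨mul_hsNorm_le_hsNorm_sub_smul_of_re_trace_le
      (re_trace_lindbladian_mul_conjTranspose_le hγh hP hM A),
    mul_hsNorm_le_hsNorm_sub_smul_of_re_trace_le
      (re_trace_lindbladianAdj_mul_conjTranspose_le hγh hP hM A)⟩

/-- Lemma 4.5 (finite-dimensional instance): if
`(γ/h) ∑ⱼ [Lⱼ,Lⱼᴴ] ≤ 2M`, then for all `λ > 0`,
`λ‖A‖ ≤ ‖(ℒ − M − λ)A‖` and `λ‖A‖ ≤ ‖(ℒ* − M − λ)A‖`. -/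
theorem lindbladian_resolvent_estimate (d J : ℕ) (hd : 1 ≤ d) (hJ : 1 ≤ J) (h γ : ℝ)
    (hh : 0 < h) (hγ : 0 ≤ γ) (P : Matrix (Fin d) (Fin d) ℂ) (hP : P.IsHermitian)
    (L : Fin J → Matrix (Fin d) (Fin d) ℂ) (M : ℝ)
    (hM : (((2 * M : ℝ) : ℂ) • (1 : Matrix (Fin d) (Fin d) ℂ)
        - ((γ / h : ℝ) : ℂ) • ∑ j, (L j * (L j)ᴴ - (L j)ᴴ * L j)).PosSemidef)
    (lam : ℝ) (hlam : 0 < lam) (A : Matrix (Fin d) (Fin d) ℂ) :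
    lam * hsNorm A ≤ hsNorm (Lindbladian h γ P L A - (((M + lam : ℝ) : ℂ)) • A)
      ∧ lam * hsNorm A ≤ hsNorm (LindbladianAdj h γ P L A - (((M + lam : ℝ) : ℂ)) • A) :=
  lindbladian_resolvent_estimate_general d J h γ hh hγ P hP L M hM lam A
end
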